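/- arXiv:2101.04598 — 10 statements merged into one kernel-verified Lean document; each statement's English description precedes it below -/
import Mathlib

section
/- In any potentially infinite model, the extension of the natural number predicate at a world w is an initial segment of the distinguished numbers: letting n be the least natural number such that a(n) ∉ D(w), if n > 0 then the set {x ∈ D(w) : ℕ x holds at w} equals {a(0), a(1), …, a(n−1)}, and n = 0 if and only if this set is empty. -/
/-- The rigid cardinality ("octothorpe") operator: #X = a(|X|). -/
def octo (a : ℕ → ℕ) (X : Finset ℕ) : ℕ := a X.card

/-- A potentially infinite (PI) model: a countably infinite set of worlds `W`,
a directed partial order `R`, nonempty finite domains strictly increasing along `R`,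
and an injection `a : ℕ → ⋃ D` implementing the rigid cardinality operator. -/
def IsPIModel {W : Type} (R : W → W → Prop) (D : W → Finset ℕ) (a : ℕ → ℕ) : Prop :=
  Countable W ∧ Infinite W ∧
  (∀ w, R w w) ∧ (∀ w s t, R w s → R s t → R w t) ∧ (∀ w s, R w s → R s w → w = s) ∧
  (∀ w s : W, ∃ t, R w t ∧ R s t) ∧
  (∀ w, (D w).Nonempty) ∧
  (∀ w s, R w s → w ≠ s → D w ⊂ D s) ∧
  Function.Injective a ∧
  (∀ n, ∃ w, a n ∈ D w)

/-- S x y ≡ ◇∃G ∃u (u ∈ G ∧ y = #G ∧ x = #(G \ {u})). -/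
def Succ {W : Type} (R : W → W → Prop) (D : W → Finset ℕ) (a : ℕ → ℕ)
    (w : W) (x y : ℕ) : Prop :=
  ∃ s, R w s ∧ ∃ G : Finset ℕ, G ⊆ D s ∧ ∃ u ∈ G, y = octo a G ∧ x = octo a (G.erase u)

/-- S' x y ≡ ◇∃F ∃u (u ∉ F ∧ x = #F ∧ y = #(F ∪ {u})). -/
def Succ' {W : Type} (R : W → W → Prop) (D : W → Finset ℕ) (a : ℕ → ℕ)
    (w : W) (x y : ℕ) : Prop :=
  ∃ s, R w s ∧ ∃ F : Finset ℕ, F ⊆ D s ∧ ∃ u ∈ D s, u ∉ F ∧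
    x = octo a F ∧ y = octo a (insert u F)

/-- The strong ancestral S⁺ of the successor relation at world `w`,
with second-order quantification over all subsets of `D w`. -/
def SAnc {W : Type} (R : W → W → Prop) (D : W → Finset ℕ) (a : ℕ → ℕ)
    (w : W) (b c : ℕ) : Prop :=
  ∀ X : Finset ℕ, X ⊆ D w →
    (∀ x ∈ D w, ∀ y ∈ D w, x ∈ X → Succ R D a w x y → y ∈ X) →
    (∀ x ∈ D w, Succ R D a w b x → x ∈ X) → c ∈ X

/-- The weak (reflexive) ancestral S⁺⁼. -/
def SAncW {W : Type} (R : W → W → Prop) (D : W → Finset ℕ) (a : ℕ → ℕ)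
    (w : W) (b c : ℕ) : Prop :=
  SAnc R D a w b c ∨ b = c

/-- ℕ x at w ≡ S⁺⁼(0,x) ∧ 0 exists at w, where 0 = #∅. -/
def NatNum {W : Type} (R : W → W → Prop) (D : W → Finset ℕ) (a : ℕ → ℕ)
    (w : W) (x : ℕ) : Prop :=
  SAncW R D a w (octo a ∅) x ∧ octo a ∅ ∈ D w

/-- +(x,y,z) ≡ ◇∃X ∃Y (x = #X ∧ y = #Y ∧ z = #(X ∪ Y) ∧ X ∩ Y = ∅). -/
def AddRel {W : Type} (R : W → W → Prop) (D : W → Finset ℕ) (a : ℕ → ℕ)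
    (w : W) (x y z : ℕ) : Prop :=
  ∃ s, R w s ∧ ∃ X Y : Finset ℕ, X ⊆ D s ∧ Y ⊆ D s ∧
    x = octo a X ∧ y = octo a Y ∧ z = octo a (X ∪ Y) ∧ X ∩ Y = ∅

/-- ×(x,y,z) ≡ ◇∃X ∃P [#X = y ∧ each row of P over X has cardinality x ∧
rows are pairwise disjoint ∧ #(union of the rows) = z]. -/
def MulRel {W : Type} (R : W → W → Prop) (D : W → Finset ℕ) (a : ℕ → ℕ)
    (w : W) (x y z : ℕ) : Prop :=
  ∃ s, R w s ∧ ∃ X : Finset ℕ, X ⊆ D s ∧ ∃ P : Finset (ℕ × ℕ), P ⊆ (D s) ×ˢ (D s) ∧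
    octo a X = y ∧
    (∀ u ∈ X, octo a ((P.filter (fun p => p.1 = u)).image Prod.snd) = x) ∧
    (∀ u ∈ X, ∀ v ∈ X, u ≠ v →
      ((P.filter (fun p => p.1 = u)).image Prod.snd) ∩
        ((P.filter (fun p => p.1 = v)).image Prod.snd) = ∅) ∧
    octo a (X.biUnion (fun u => (P.filter (fun p => p.1 = u)).image Prod.snd)) = z

/-! Since domains grow without bound along `R`, the successor relation `S` holds exactly
between consecutive values `a j`, `a (j + 1)`. So inside `D w` the ancestral of `S` from
`a 0` runs through `a 0, a 1, …` and stops at the first value `a n` missing from `D w`. -/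

@[simp]
lemma octo_empty (a : ℕ → ℕ) : octo a ∅ = a 0 := rfl

section Ancestral

variable {W : Type} {R : W → W → Prop} {D : W → Finset ℕ} {a : ℕ → ℕ} {w : W}

lemma Succ.exists_eq {x y : ℕ} (h : Succ R D a w x y) : ∃ j, x = a j ∧ y = a (j + 1) := by
  obtain ⟨-, -, G, -, u, hu, rfl, rfl⟩ := h
  have hpos : 0 < G.card := Finset.card_pos.mpr ⟨u, hu⟩
  refine ⟨G.card - 1, ?_, ?_⟩
  · rw [octo, Finset.card_erase_of_mem hu]
  · rw [octo, Nat.sub_add_cancel hpos]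

lemma SAncW.succ {b x y : ℕ} (h : SAncW R D a w b x) (hx : x ∈ D w) (hy : y ∈ D w)
    (hxy : Succ R D a w x y) : SAncW R D a w b y := by
  refine Or.inl fun X hXD hclosed hbase => ?_
  rcases h with h | rfl
  · exact hclosed x hx y hy (h X hXD hclosed hbase) hxy
  · exact hbase y hy hxy

end Ancestral

namespace IsPIModel

variable {W : Type} {R : W → W → Prop} {D : W → Finset ℕ} {a : ℕ → ℕ}

lemma domain_mono (hM : IsPIModel R D a) {w s : W} (h : R w s) : D w ⊆ D s := by
  obtain ⟨-, -, -, -, -, -, -, hgrow, -, -⟩ := hM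
  by_cases hws : w = s
  · rw [hws]
  · exact (hgrow w s h hws).subset

/-- By directedness a maximal world would contain the infinite range of `a` in its finite
domain. -/
lemma exists_rel_ne (hM : IsPIModel R D a) (w : W) : ∃ s, R w s ∧ s ≠ w := by
  have ⟨_, _, _, _, _, hdir, _, _, hinj, hcov⟩ := hM
  by_contra! hmax
  have hrange : Set.range a ⊆ D w := by
    rintro _ ⟨i, rfl⟩
    obtain ⟨t, hit⟩ := hcov i
    obtain ⟨s, hts, hws⟩ := hdir t w
    exact hmax s hws ▸ hM.domain_mono hts hit
  exact Set.infinite_range_of_injective hinj ((D w).finite_toSet.subset hrange)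

lemma exists_rel_le_card (hM : IsPIModel R D a) (w : W) (m : ℕ) :
    ∃ s, R w s ∧ m ≤ (D s).card := by
  have ⟨_, _, hrefl, htrans, _, _, _, hgrow, _, _⟩ := hM
  induction m with
  | zero => exact ⟨w, hrefl w, Nat.zero_le _⟩
  | succ m ih =>
    obtain ⟨s, hws, hm⟩ := ih
    obtain ⟨t, hst, hts⟩ := hM.exists_rel_ne s
    have hlt := Finset.card_lt_card (hgrow s t hst hts.symm)
    exact ⟨t, htrans w s t hws hst, by omega⟩

lemma succ_iff (hM : IsPIModel R D a) (w : W) (x y : ℕ) :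
    Succ R D a w x y ↔ ∃ j, x = a j ∧ y = a (j + 1) := by
  refine ⟨Succ.exists_eq, ?_⟩
  rintro ⟨j, rfl, rfl⟩
  obtain ⟨s, hws, hcard⟩ := hM.exists_rel_le_card w (j + 1)
  obtain ⟨G, hGs, hG⟩ := Finset.exists_subset_card_eq hcard
  obtain ⟨u, hu⟩ := Finset.card_pos.mp (by omega : 0 < G.card)
  refine ⟨s, hws, G, hGs, u, hu, ?_, ?_⟩
  · rw [octo, hG]
  · rw [octo, Finset.card_erase_of_mem hu, hG, Nat.add_sub_cancel]

variable {w : W} {n : ℕ}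

lemma sAncW_zero (hM : IsPIModel R D a) (hbelow : ∀ k < n, a k ∈ D w) {k : ℕ} (hk : k < n) :
    SAncW R D a w (a 0) (a k) := by
  induction k with
  | zero => exact Or.inr rfl
  | succ k ih =>
    exact (ih (by omega)).succ (hbelow k (by omega)) (hbelow (k + 1) hk)
      ((hM.succ_iff w _ _).mpr ⟨k, rfl, rfl⟩)

/-- Instantiate the ancestral at `a '' [0, n)`, which is closed under `Succ` within `D w`
because `a n ∉ D w`. -/
lemma mem_of_sAncW_zero (hM : IsPIModel R D a) (hbelow : ∀ k < n, a k ∈ D w)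
    (hn : a n ∉ D w) (hpos : 0 < n) {x : ℕ} (hx : SAncW R D a w (a 0) x) :
    ∃ k < n, a k = x := by
  have ⟨_, _, _, _, _, _, _, _, hinj, _⟩ := hM
  set X := (Finset.range n).image a
  have hXD : X ⊆ D w := by
    simpa [X, Finset.image_subset_iff] using hbelow
  have hclosed : ∀ p ∈ D w, ∀ q ∈ D w, p ∈ X → Succ R D a w p q → q ∈ X := by
    intro p _ q hq hp hpq
    obtain ⟨j, rfl, rfl⟩ := (hM.succ_iff w p q).mp hpq
    obtain ⟨k, hk, hkj⟩ := Finset.mem_image.mp hp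
    obtain rfl := hinj hkj
    have hkn : k + 1 ≠ n := by rintro rfl; exact hn hq
    rw [Finset.mem_range] at hk
    exact Finset.mem_image_of_mem a (Finset.mem_range.mpr (by omega))
  have h0 : a 0 ∈ X := Finset.mem_image_of_mem a (Finset.mem_range.mpr hpos)
  rcases hx with hx | rfl
  · simpa [X] using hx X hXD hclosed fun q hq => hclosed _ (hXD h0) q hq h0
  · exact ⟨0, hpos, rfl⟩

end IsPIModel

/-- The extension of ℕ at a world is the initial segment of the distinguished numbers:
if n is the least number with a(n) ∉ D w, then for n > 0 the ℕ's at w are exactly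
{a(0), …, a(n−1)}, and n = 0 iff no element of D w is a natural number at w. -/
theorem stmt4 {W : Type} (R : W → W → Prop) (D : W → Finset ℕ) (aa : ℕ → ℕ)
    (hM : IsPIModel R D aa) (w : W) (n : ℕ)
    (hbelow : ∀ k < n, aa k ∈ D w) (hn : aa n ∉ D w) :
    (0 < n → {x : ℕ | x ∈ D w ∧ NatNum R D aa w x} = aa '' {k : ℕ | k < n}) ∧
    (n = 0 ↔ {x : ℕ | x ∈ D w ∧ NatNum R D aa w x} = ∅) := by
  refine ⟨fun hpos => ?_, ⟨?_, fun hempty => ?_⟩⟩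
  · ext x
    simp only [NatNum, octo_empty, Set.mem_ofPred_eq, Set.mem_image]
    constructor
    · rintro ⟨-, hx, -⟩
      exact hM.mem_of_sAncW_zero hbelow hn hpos hx
    · rintro ⟨k, hk, rfl⟩
      exact ⟨hbelow k hk, hM.sAncW_zero hbelow hk, hbelow 0 hpos⟩
  · rintro rfl
    exact Set.eq_empty_of_forall_notMem fun x ⟨_, _, h0⟩ => hn h0
  · by_contra hn0
    have h0 := hbelow 0 (Nat.pos_of_ne_zero hn0)
    exact Set.eq_empty_iff_forall_notMem.mp hempty (aa 0) ⟨h0, Or.inr rfl, h0⟩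
end

section
/- In any potentially infinite model, the natural number predicate is stable: for all worlds w and all x, if ℕ x holds at w, then ℕ x holds at every world s with R(w,s). -/
/-- The natural number predicate is stable. -/
theorem stmt5 {W : Type} (R : W → W → Prop) (D : W → Finset ℕ) (a : ℕ → ℕ)
    (hM : IsPIModel R D a) (w s : W) (x : ℕ)
    (hws : R w s) (hN : NatNum R D a w x) : NatNum R D a s x := by
  obtain ⟨_, _, _, htrans, _, hdir, _, hmono, _, _⟩ := hM
  have hDsub : ∀ u v : W, R u v → D u ⊆ D v := by
    intro u v huv
    by_cases h : u = v
    · subst h; exact Finset.Subset.refl _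
    · exact (hmono u v huv h).subset
  have hsuc : ∀ b c, Succ R D a w b c → Succ R D a s b c := by
    rintro b c ⟨t, hwt, G, hG, u, hu, hy, hx⟩
    obtain ⟨t', hst', htt'⟩ := hdir s t
    exact ⟨t', hst', G, hG.trans (hDsub t t' htt'), u, hu, hy, hx⟩
  have hwsub : D w ⊆ D s := hDsub w s hws
  obtain ⟨hanc, h0⟩ := hN
  refine ⟨?_, hwsub h0⟩
  rcases hanc with hanc | heq
  · left
    intro X hX hcl hinit
    have := hanc (X ∩ D w) (Finset.inter_subset_right)
      (by
        intro p hp q hq hpX hS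
        have hpX' : p ∈ X := (Finset.mem_inter.mp hpX).1
        exact Finset.mem_inter.mpr ⟨hcl p (hwsub hp) q (hwsub hq) hpX' (hsuc p q hS), hq⟩)
      (by
        intro p hp hS
        exact Finset.mem_inter.mpr ⟨hinit p (hwsub hp) (hsuc _ p hS), hp⟩)
    exact (Finset.mem_inter.mp this).1
  · right; exact heq
end

section
/- In any potentially infinite model, for every world w and every set X ⊆ D(w), there exists a world s with R(w,s) such that #X is a natural number at s, i.e., ℕ(#X) holds at s. -/
/-- For every world w and every X ⊆ D w, the cardinality #X is possibly a natural number. -/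
theorem stmt6 {W : Type} (R : W → W → Prop) (D : W → Finset ℕ) (a : ℕ → ℕ)
    (hM : IsPIModel R D a) (w : W) (X : Finset ℕ) (hX : X ⊆ D w) :
    ∃ s, R w s ∧ NatNum R D a s (octo a X) := by
  obtain ⟨_, _, hrefl, htrans, _, hdir, hne, hmono, hainj, hex⟩ := hM
  -- monotonicity of domains
  have Dmono : ∀ u v, R u v → D u ⊆ D v := by
    intro u v huv
    by_cases h : u = v
    · subst h; exact subset_rfl
    · exact (hmono u v huv h).1
  -- there is a world above w containing a 0, ..., a N
  have key : ∀ N : ℕ, ∃ s, R w s ∧ ∀ i ≤ N, a i ∈ D s := by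
    intro N
    induction N with
    | zero =>
        obtain ⟨w0, hw0⟩ := hex 0
        obtain ⟨t, hwt, hw0t⟩ := hdir w w0
        exact ⟨t, hwt, fun i hi => by
          interval_cases i; exact Dmono _ _ hw0t hw0⟩
    | succ N ih =>
        obtain ⟨s, hws, hs⟩ := ih
        obtain ⟨w', hw'⟩ := hex (N + 1)
        obtain ⟨t, hst, hw't⟩ := hdir s w'
        refine ⟨t, htrans _ _ _ hws hst, fun i hi => ?_⟩
        rcases Nat.lt_or_ge i (N + 1) with h | h
        · exact Dmono _ _ hst (hs i (Nat.lt_succ_iff.mp h))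
        · have : i = N + 1 := le_antisymm hi h
          subst this
          exact Dmono _ _ hw't hw'
  set N := X.card with hN
  obtain ⟨s, hws, hs⟩ := key N
  have ha0 : a 0 ∈ D s := hs 0 (Nat.zero_le _)
  have hoX : octo a X = a N := rfl
  have ho0 : octo a (∅ : Finset ℕ) = a 0 := rfl
  -- D s has at least N + 1 elements
  have hcard : N + 1 ≤ (D s).card := by
    have himg : (Finset.range (N + 1)).image a ⊆ D s := by
      intro x hx
      obtain ⟨i, hi, rfl⟩ := Finset.mem_image.mp hx
      exact hs i (Nat.lt_succ_iff.mp (Finset.mem_range.mp hi))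
    calc N + 1 = ((Finset.range (N + 1)).image a).card := by
            rw [Finset.card_image_of_injective _ hainj, Finset.card_range]
      _ ≤ (D s).card := Finset.card_le_card himg
  refine ⟨s, hws, ?_, ha0⟩
  rw [ho0, hoX]
  -- the successor steps
  have hsucc : ∀ k, k + 1 ≤ N → Succ R D a s (a k) (a (k + 1)) := by
    intro k hk
    obtain ⟨G, hGsub, hGcard⟩ := Finset.exists_subset_card_eq
      (show k + 1 ≤ (D s).card by omega)
    have hGne : G.Nonempty := Finset.card_pos.mp (by omega)
    obtain ⟨u, hu⟩ := hGne
    refine ⟨s, hrefl s, G, hGsub, u, hu, ?_, ?_⟩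
    · unfold octo; rw [hGcard]
    · unfold octo; rw [Finset.card_erase_of_mem hu, hGcard]
      congr 1
  rcases Nat.eq_zero_or_pos N with h0 | hpos
  · right; rw [h0]
  · left
    intro Y hYsub hclosed hbase
    have step : ∀ k, k + 1 ≤ N → a (k + 1) ∈ Y := by
      intro k
      induction k with
      | zero =>
          intro hk
          exact hbase (a 1) (hs 1 hk) (hsucc 0 hk)
      | succ k ih =>
          intro hk
          have hk' : k + 1 ≤ N := by omega
          exact hclosed (a (k + 1)) (hs (k + 1) hk') (a (k + 2))
            (hs (k + 2) hk) (ih hk') (hsucc (k + 1) hk)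
    have : a (N - 1 + 1) ∈ Y := step (N - 1) (by omega)
    have hNN : N - 1 + 1 = N := by omega
    rwa [hNN] at this
end

section
/- In any potentially infinite model, the successor relation is functional on natural numbers: at every world w, for all x, y, z with ℕ x, ℕ y, ℕ z at w, if S x y and S x z hold at w then y = z. -/
/-- The successor relation is functional on the natural numbers. -/
theorem stmt7 {W : Type} (R : W → W → Prop) (D : W → Finset ℕ) (a : ℕ → ℕ)
    (hM : IsPIModel R D a) (w : W) (x y z : ℕ)
    (hx : NatNum R D a w x) (hy : NatNum R D a w y) (hz : NatNum R D a w z)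
    (h1 : Succ R D a w x y) (h2 : Succ R D a w x z) : y = z := by
  obtain ⟨_, _, _, _, _, _, _, _, ha, _⟩ := hM
  obtain ⟨s, _, G, _, u, huG, hy1, hx1⟩ := h1
  obtain ⟨t, _, H, _, v, hvH, hz1, hx2⟩ := h2
  have hcard : (G.erase u).card = (H.erase v).card := ha (hx1.symm.trans hx2)
  rw [Finset.card_erase_of_mem huG, Finset.card_erase_of_mem hvH] at hcard
  have hG : 1 ≤ G.card := Finset.card_pos.mpr ⟨u, huG⟩
  have hH : 1 ≤ H.card := Finset.card_pos.mpr ⟨v, hvH⟩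
  have : G.card = H.card := by omega
  rw [hy1, hz1, octo, octo, this]
end

section
/- In any potentially infinite model, every natural number possibly has a natural number successor: at every world w, for every x with ℕ x at w, there exists a world s with R(w,s) and a y ∈ D(s) such that ℕ y and S x y hold at s. -/
/-- Every natural number possibly has a natural number successor. -/
theorem stmt8 {W : Type} (R : W → W → Prop) (D : W → Finset ℕ) (a : ℕ → ℕ)
    (hM : IsPIModel R D a) (w : W) (x : ℕ) (hx : NatNum R D a w x) :
    ∃ s, R w s ∧ ∃ y ∈ D s, NatNum R D a s y ∧ Succ R D a s x y := by
  classical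
  obtain ⟨hcnt, hinf, hrefl, htrans, hanti, hdir, hne, hmono, hainj, hacov⟩ := hM
  have hsub : ∀ u t : W, R u t → D u ⊆ D t := by
    intro u t h
    by_cases hut : u = t
    · subst hut; exact Finset.Subset.refl _
    · exact (hmono u t h hut).1
  have hcover : ∀ (v : W) (m : ℕ), ∃ s, R v s ∧ ∀ i, i < m → a i ∈ D s := by
    intro v m
    induction m with
    | zero => exact ⟨v, hrefl v, fun i hi => absurd hi (Nat.not_lt_zero i)⟩
    | succ m ih =>
      obtain ⟨s, hvs, hs⟩ := ih
      obtain ⟨t, hat⟩ := hacov m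
      obtain ⟨u, hsu, htu⟩ := hdir s t
      refine ⟨u, htrans v s u hvs hsu, fun i hi => ?_⟩
      rcases Nat.lt_succ_iff_lt_or_eq.mp hi with h | h
      · exact hsub s u hsu (hs i h)
      · subst h; exact hsub t u htu hat
  have hsucc : ∀ (s : W) (n : ℕ), (∀ i, i ≤ n → a i ∈ D s) →
      Succ R D a s (a n) (a (n+1)) := by
    intro s n hmem
    have hGsub : (Finset.range (n+1)).image a ⊆ D s := by
      intro z hz
      simp only [Finset.mem_image, Finset.mem_range] at hz
      obtain ⟨i, hi, rfl⟩ := hz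
      exact hmem i (Nat.lt_succ_iff.mp hi)
    have h0 : a 0 ∈ (Finset.range (n+1)).image a :=
      Finset.mem_image_of_mem a (Finset.mem_range.mpr (Nat.succ_pos n))
    refine ⟨s, hrefl s, (Finset.range (n+1)).image a, hGsub, a 0, h0, ?_, ?_⟩
    · unfold octo
      rw [Finset.card_image_of_injective _ hainj, Finset.card_range]
    · unfold octo
      rw [Finset.card_erase_of_mem h0, Finset.card_image_of_injective _ hainj,
        Finset.card_range]
      simp
  have hx0 : octo a ∅ = a 0 := by simp [octo]
  have hxrange : ∃ n, x = a n := by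
    rcases hx.1 with h | h
    · have hmemX := h ((D w).filter (fun z => ∃ n, a n = z)) (Finset.filter_subset _ _)
        (by
          rintro x' _ y hy _ ⟨s, _, G, _, u, _, hyG, _⟩
          exact Finset.mem_filter.mpr ⟨hy, G.card, hyG.symm⟩)
        (by
          rintro x' hx' ⟨s, _, G, _, u, _, hyG, _⟩
          exact Finset.mem_filter.mpr ⟨hx', G.card, hyG.symm⟩)
      obtain ⟨_, n, hn⟩ := Finset.mem_filter.mp hmemX
      exact ⟨n, hn.symm⟩
    · exact ⟨0, by rw [← h, hx0]⟩
  obtain ⟨n, rfl⟩ := hxrange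
  obtain ⟨s, hws, hmem⟩ := hcover w (n+2)
  refine ⟨s, hws, a (n+1), hmem (n+1) (by omega), ⟨?_, ?_⟩,
    hsucc s n (fun i hi => hmem i (by omega))⟩
  · left
    rw [hx0]
    intro X hXsub hclosed hbase
    have key : ∀ k, k ≤ n → a (k+1) ∈ X := by
      intro k
      induction k with
      | zero =>
        intro _
        exact hbase (a 1) (hmem 1 (by omega)) (hsucc s 0 (fun i hi => hmem i (by omega)))
      | succ k ih =>
        intro hk
        exact hclosed (a (k+1)) (hmem (k+1) (by omega)) (a (k+2)) (hmem (k+2) (by omega))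
          (ih (by omega)) (hsucc s (k+1) (fun i hi => hmem i (by omega)))
    exact key n le_rfl
  · rw [hx0]; exact hmem 0 (by omega)
end

section
/- In any potentially infinite model, the successor relation is injective on natural numbers: at every world w, for all x, y, z with ℕ x, ℕ y, ℕ z at w, if S x z and S y z hold at w, then x = y. -/
/-- The successor relation is injective on the natural numbers. -/
theorem stmt9 {W : Type} (R : W → W → Prop) (D : W → Finset ℕ) (a : ℕ → ℕ)
    (hM : IsPIModel R D a) (w : W) (x y z : ℕ)
    (hx : NatNum R D a w x) (hy : NatNum R D a w y) (hz : NatNum R D a w z)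
    (h1 : Succ R D a w x z) (h2 : Succ R D a w y z) : x = y := by
  obtain ⟨_, _, _, _, _, _, _, _, ha, _⟩ := hM
  obtain ⟨s1, _, G1, _, u1, hu1, hz1, hx1⟩ := h1
  obtain ⟨s2, _, G2, _, u2, hu2, hz2, hy2⟩ := h2
  have hc : G1.card = G2.card := ha (hz1.symm.trans hz2)
  subst hx1 hy2
  unfold octo
  rw [Finset.card_erase_of_mem hu1, Finset.card_erase_of_mem hu2, hc]
end

section
/- In any potentially infinite model, the modal addition relation is well-defined (functional) on natural numbers: at every world w, for all x, y, z, z' with ℕ x, ℕ y, ℕ z, ℕ z' at w, if +(x,y,z) and +(x,y,z') hold at w, then z = z'. -/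
/-- The modal addition relation is functional on the natural numbers. -/
theorem stmt11 {W : Type} (R : W → W → Prop) (D : W → Finset ℕ) (a : ℕ → ℕ)
    (hM : IsPIModel R D a) (w : W) (x y z z' : ℕ)
    (hx : NatNum R D a w x) (hy : NatNum R D a w y)
    (hz : NatNum R D a w z) (hz' : NatNum R D a w z')
    (h1 : AddRel R D a w x y z) (h2 : AddRel R D a w x y z') : z = z' := by
  obtain ⟨_, _, _, _, _, _, _, _, ha, _⟩ := hM
  obtain ⟨s, -, X, Y, -, -, hxX, hyY, hzXY, hdisj⟩ := h1
  obtain ⟨s', -, X', Y', -, -, hxX', hyY', hzXY', hdisj'⟩ := h2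
  have hX : X.card = X'.card := ha (hxX.symm.trans hxX')
  have hY : Y.card = Y'.card := ha (hyY.symm.trans hyY')
  have c1 : (X ∪ Y).card = X.card + Y.card :=
    Finset.card_union_of_disjoint (Finset.disjoint_iff_inter_eq_empty.mpr hdisj)
  have c2 : (X' ∪ Y').card = X'.card + Y'.card :=
    Finset.card_union_of_disjoint (Finset.disjoint_iff_inter_eq_empty.mpr hdisj')
  rw [hzXY, hzXY']
  unfold octo
  rw [c1, c2, hX, hY]
end

section
/- In any potentially infinite model, addition commutes with successor (the recursion clause Q4): at every world w, for all n, x₀, x₁, y₀, y₁, z with ℕ holding of each at w, if S x₀ x₁, S y₀ y₁, +(n, x₀, y₀), and +(n, x₁, z) all hold at w, then y₁ = z. -/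
/-- The recursion clause Q4 for addition: S x₀ x₁ ∧ S y₀ y₁ ∧ +(n,x₀,y₀) ∧ +(n,x₁,z) → y₁ = z. -/
theorem stmt14 {W : Type} (R : W → W → Prop) (D : W → Finset ℕ) (a : ℕ → ℕ)
    (hM : IsPIModel R D a) (w : W) (n x₀ x₁ y₀ y₁ z : ℕ)
    (hn : NatNum R D a w n) (hx₀ : NatNum R D a w x₀) (hx₁ : NatNum R D a w x₁)
    (hy₀ : NatNum R D a w y₀) (hy₁ : NatNum R D a w y₁) (hz : NatNum R D a w z)
    (hS1 : Succ R D a w x₀ x₁) (hS2 : Succ R D a w y₀ y₁)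
    (hA1 : AddRel R D a w n x₀ y₀) (hA2 : AddRel R D a w n x₁ z) : y₁ = z := by
  obtain ⟨_, _, _, _, _, _, _, _, ha, _⟩ := hM
  obtain ⟨s1, _, G1, _, u1, hu1, hx1, hx0⟩ := hS1
  obtain ⟨s2, _, G2, _, u2, hu2, hy1e, hy0e⟩ := hS2
  obtain ⟨t1, _, X1, Y1, _, _, hn1, hxx0, hyy0, hdisj1⟩ := hA1
  obtain ⟨t2, _, X2, Y2, _, _, hn2, hxx1, hzz, hdisj2⟩ := hA2
  simp only [octo] at *
  have p1 := Finset.card_pos.mpr ⟨u1, hu1⟩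
  have p2 := Finset.card_pos.mpr ⟨u2, hu2⟩
  have e1 : G1.card = (G1.erase u1).card + 1 := by
    rw [Finset.card_erase_of_mem hu1]; omega
  have e2 : G2.card = (G2.erase u2).card + 1 := by
    rw [Finset.card_erase_of_mem hu2]; omega
  have c1 : (X1 ∪ Y1).card = X1.card + Y1.card := by
    rw [Finset.card_union_of_disjoint (Finset.disjoint_iff_inter_eq_empty.mpr hdisj1)]
  have c2 : (X2 ∪ Y2).card = X2.card + Y2.card := by
    rw [Finset.card_union_of_disjoint (Finset.disjoint_iff_inter_eq_empty.mpr hdisj2)]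
  have hX : X1.card = X2.card := ha (hn1 ▸ hn2)
  have hY1 : Y1.card = (G1.erase u1).card := ha (by rw [← hxx0, ← hx0])
  have hY2 : Y2.card = G1.card := ha (by rw [← hxx1, ← hx1])
  have hG2 : G2.card = (X1 ∪ Y1).card + 1 := by
    rw [e2]; congr 1; exact ha (by rw [← hy0e, ← hyy0])
  rw [hy1e, hzz]
  congr 1
  omega
end

section
/- In any potentially infinite model, modal induction holds for stable formulas: let φ be a property of elements of ⋃_w D(w) relativized to worlds such that φ is stable (for all worlds w and s with R(w,s) and all x, if φ(x) holds at w then φ(x) holds at s). Then at every world w, if φ(0) holds at w and for every world s with R(w,s) and all x, y ∈ D(s) with ℕ x, ℕ y at s, φ(x) and S x y at s imply φ(y) at s, then for every world s with R(w,s) and every x ∈ D(s) with ℕ x at s, φ(x) holds at s. -/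
/-- Modal induction holds for stable formulas. -/
theorem stmt16 {W : Type} (R : W → W → Prop) (D : W → Finset ℕ) (a : ℕ → ℕ)
    (hM : IsPIModel R D a) (φ : W → ℕ → Prop)
    (hstable : ∀ w s, R w s → ∀ x, φ w x → φ s x) (w : W)
    (hbase : φ w (octo a ∅))
    (hstep : ∀ s, R w s → ∀ x ∈ D s, ∀ y ∈ D s,
      NatNum R D a s x → NatNum R D a s y → φ s x → Succ R D a s x y → φ s y) :
    ∀ s, R w s → ∀ x ∈ D s, NatNum R D a s x → φ s x := by
  classical
  intro s hws x hxD hx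
  obtain ⟨hanc, h0⟩ := hx
  have hφ0 : φ s (octo a ∅) := hstable w s hws _ hbase
  have hN0 : NatNum R D a s (octo a ∅) := ⟨Or.inr rfl, h0⟩
  rcases hanc with hanc | heq
  · have hmem := hanc ((D s).filter (fun z => NatNum R D a s z ∧ φ s z))
      (Finset.filter_subset _ _) ?closed ?succ0
    · exact ((Finset.mem_filter.mp hmem).2).2
    case closed =>
      intro x' hx'D y hyD hx'X hS
      obtain ⟨_, hNx', hφx'⟩ := Finset.mem_filter.mp hx'X
      have hNy : NatNum R D a s y := by
        refine ⟨Or.inl ?_, h0⟩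
        intro X hXD hclosed hsucc
        rcases hNx'.1 with h | h
        · exact hclosed x' hx'D y hyD (h X hXD hclosed hsucc) hS
        · rw [← h] at hS; exact hsucc y hyD hS
      exact Finset.mem_filter.mpr ⟨hyD, hNy, hstep s hws x' hx'D y hyD hNx' hNy hφx' hS⟩
    case succ0 =>
      intro y hyD hS
      have hNy : NatNum R D a s y :=
        ⟨Or.inl (fun X hXD hclosed hsucc => hsucc y hyD hS), h0⟩
      exact Finset.mem_filter.mpr ⟨hyD, hNy, hstep s hws _ h0 y hyD hN0 hNy hφ0 hS⟩
  · rw [← heq]; exact hφ0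
end

section
/- Modal induction fails for the non-stable formula φ(x) ≡ ∀z (z = x) in the minimal model: at world 0 of the minimal model, φ(0) holds (every element of D(0) = {0} equals 0), and for every world w ≥ 0 and all x, y ∈ D(w) with ℕ x, ℕ y at w, if φ(x) and S x y hold at w then φ(y) holds at w; yet it is not the case that at every world w ≥ 0 every x with ℕ x at w satisfies φ(x) at w (world 1, with D(1) = {0,1}, is a counterexample). -/
/-- Modal induction fails for the non-stable formula φ(x) ≡ ∀z (z = x) in the minimal model:
the base case and inductive step hold at world 0, but the conclusion fails. -/
theorem stmt18 :
    ((∀ z ∈ Finset.range (0 + 1), z = octo id ∅) ∧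
      (∀ w : ℕ, 0 ≤ w →
        ∀ x ∈ Finset.range (w + 1), ∀ y ∈ Finset.range (w + 1),
          NatNum (fun m n : ℕ => m ≤ n) (fun n : ℕ => Finset.range (n + 1)) id w x →
          NatNum (fun m n : ℕ => m ≤ n) (fun n : ℕ => Finset.range (n + 1)) id w y →
          (∀ z ∈ Finset.range (w + 1), z = x) →
          Succ (fun m n : ℕ => m ≤ n) (fun n : ℕ => Finset.range (n + 1)) id w x y →
          (∀ z ∈ Finset.range (w + 1), z = y))) ∧
    ¬ (∀ w : ℕ, 0 ≤ w → ∀ x ∈ Finset.range (w + 1),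
        NatNum (fun m n : ℕ => m ≤ n) (fun n : ℕ => Finset.range (n + 1)) id w x →
        ∀ z ∈ Finset.range (w + 1), z = x) := by
  refine ⟨⟨?_, ?_⟩, ?_⟩
  · intro z hz
    simp [octo] at hz ⊢
    omega
  · intro w _ x hx y hy _ _ hphi _ z hz
    have h0 : (0:ℕ) = x := hphi 0 (by simp)
    have hw : w = x := hphi w (by simp)
    have hz' : z = x := hphi z hz
    simp [Finset.mem_range] at hy
    omega
  · intro h
    have hn : NatNum (fun m n : ℕ => m ≤ n) (fun n : ℕ => Finset.range (n + 1)) id 1 1 := by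
      constructor
      · left
        intro X hX hclosed hsucc
        apply hsucc 1 (by simp)
        refine ⟨1, le_refl 1, {0}, by simp, 0, by simp, ?_, ?_⟩ <;> simp [octo]
      · simp [octo]
    have := h 1 (by omega) 1 (by simp) hn 0 (by simp)
    omega
end
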